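/- Convergence of objective values for Algorithm 1: under Assumptions A and B, let {γ_ν} and {ε_ν} be positive sequences decreasing to 0 with Σ_{ν=0}^∞ γ_ν < ∞, let x₀ ∈ X, and let {x_ν} be produced by Algorithm 1: for each ν set x_{ν,0} = x_ν; for each i, take subproblem solutions (x^s_{ν,i}, y^s_{ν,i}, c^s_{ν,i}) at z = x_{ν,i} with parameter γ_ν for every scenario s, and let x_{ν,i+1} minimize x ↦ φ(x) + (1/S) Σ_{s=1}^S [ ‖x‖²/(2γ_ν) − ( ‖x_{ν,i}‖²/(2γ_ν) − e_{γ_ν}ψ_s(x_{ν,i}) ) − ⟨ x^s_{ν,i}/γ_ν + c^s_{ν,i}, x − x_{ν,i} ⟩ ] over X; let i_ν be the first index i with ‖x_{ν,i+1} − x_{ν,i}‖ ≤ ε_ν γ_ν (which is finite), and set x_{ν+1} = x_{ν,i_ν+1}. Define ζ̄_S(x) = φ(x) + (1/S) Σ_{s=1}^S ψ̄_s(x,x). Then the sequence { ζ̄_S(x_ν) } converges, and its limit equals ζ̄_S(x̄) for every accumulation point x̄ of {x_ν}. -/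

import Mathlib

/-!
The partial Moreau envelope sandwiches the diagonal recourse value:
`e_γψ_s(x) ≤ ψ̄_s(x, x) ≤ e_γψ_s(x) + κ_s² γ / 2`, the upper bound coming from Assumption B at
the subproblem solution together with `κ t ≤ t² / (2γ) + κ² γ / 2`. Since
`e_γψ_s = ‖·‖² / (2γ) - h_s` with `h_s` convex and `x^s / γ + c^s` a subgradient of `h_s`, the
master problem minimizes a majorant of `φ + (1/S) Σ e_γψ_s` that is tight at the current point,
so the inner iterations do not increase it. Hence `ζ̄_S(x_{ν+1}) ≤ ζ̄_S(x_ν) + C γ_ν` with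
`C = (1/S) Σ κ_s² / 2`. As `ζ̄_S` is continuous on the compact set `X` (concave in `z`, Lipschitz
in `x`), it is bounded below there, and summability of `γ_ν` makes `ζ̄_S(x_ν)` converge;
continuity identifies the limit at accumulation points.
-/

open scoped RealInnerProductSpace
open Filter Topology

/-- The partial Moreau envelope of the recourse function:
`e_γψ(z) = inf { f(z,y) + ‖x - z‖²/(2γ) : x ∈ X̄, G(x,y) ≤ 0 }`. -/
noncomputable def penv {n₁ n₂ ℓ : ℕ}
    (Xb : Set (EuclideanSpace ℝ (Fin n₁)))
    (f : EuclideanSpace ℝ (Fin n₁) → EuclideanSpace ℝ (Fin n₂) → ℝ)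
    (G : EuclideanSpace ℝ (Fin n₁) → EuclideanSpace ℝ (Fin n₂) → Fin ℓ → ℝ)
    (γ : ℝ) (z : EuclideanSpace ℝ (Fin n₁)) : ℝ :=
  sInf {v : ℝ | ∃ x ∈ Xb, ∃ y : EuclideanSpace ℝ (Fin n₂),
    (∀ i, G x y i ≤ 0) ∧ v = f z y + ‖x - z‖ ^ 2 / (2 * γ)}

theorem exists_tendsto_of_le_add_of_summable {a c : ℕ → ℝ} (h : ∀ n, a (n + 1) ≤ a n + c n)
    (hc : ∀ n, 0 ≤ c n) (hs : Summable c) (ha : BddBelow (Set.range a)) :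
    ∃ L, Tendsto a atTop (𝓝 L) := by
  set b : ℕ → ℝ := fun n => a n - ∑ k ∈ Finset.range n, c k
  have hb : Antitone b := antitone_nat_of_succ_le fun n => by
    simp only [b, Finset.sum_range_succ]
    linarith [h n]
  have hbdd : BddBelow (Set.range b) := by
    obtain ⟨m, hm⟩ := ha
    refine ⟨m - ∑' k, c k, Set.forall_mem_range.2 fun n => ?_⟩
    have := hs.sum_le_tsum (Finset.range n) fun k _ => hc k
    linarith [hm (Set.mem_range_self n)]
  refine ⟨_, ((tendsto_atTop_ciInf hb hbdd).add hs.hasSum.tendsto_sum_nat).congr fun n => ?_⟩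
  simp [b]

theorem eq_of_tendsto_comp_of_tendsto_subseq {α β : Type*} [TopologicalSpace α]
    [TopologicalSpace β] [T2Space β] {X : Set α} {Z : α → β} {x : ℕ → α} {σ : ℕ → ℕ} {L : β}
    {xbar : α} (hZ : ContinuousOn Z X) (hX : IsClosed X) (hx : ∀ n, x n ∈ X)
    (hL : Tendsto (fun n => Z (x n)) atTop (𝓝 L)) (hσ : StrictMono σ)
    (hlim : Tendsto (fun k => x (σ k)) atTop (𝓝 xbar)) : Z xbar = L := by
  have hxX : ∀ᶠ k in atTop, x (σ k) ∈ X := Eventually.of_forall fun k => hx (σ k)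
  have hxbar : xbar ∈ X := hX.mem_of_tendsto hlim hxX
  exact tendsto_nhds_unique ((hZ xbar hxbar).tendsto.comp
    (tendsto_nhdsWithin_of_tendsto_nhds_of_eventually_within _ hlim hxX))
    (hL.comp hσ.tendsto_atTop)

theorem concaveOn_of_le_of_exists_eq {E Y : Type*} [AddCommMonoid E] [Module ℝ E] {D : Set E}
    {F : Set Y} {g : E → ℝ} {f : E → Y → ℝ} (hD : Convex ℝ D)
    (hf : ∀ y ∈ F, ConcaveOn ℝ D (f · y)) (hle : ∀ z ∈ D, ∀ y ∈ F, g z ≤ f z y)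
    (hatt : ∀ z ∈ D, ∃ y ∈ F, g z = f z y) : ConcaveOn ℝ D g := by
  refine ⟨hD, fun z₁ h₁ z₂ h₂ a b ha hb hab => ?_⟩
  obtain ⟨y, hy, hgy⟩ := hatt _ (hD h₁ h₂ ha hb hab)
  calc a • g z₁ + b • g z₂ ≤ a • f z₁ y + b • f z₂ y := by
        gcongr
        exacts [hle z₁ h₁ y hy, hle z₂ h₂ y hy]
    _ ≤ f (a • z₁ + b • z₂) y := (hf y hy).2 h₁ h₂ ha hb hab
    _ = g (a • z₁ + b • z₂) := hgy.symm

theorem continuousWithinAt_diag_of_dist_le {α : Type*} [PseudoMetricSpace α] {ψ : α → α → ℝ}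
    {X : Set α} {p : α} {κ : ℝ} (hlip : ∀ x ∈ X, dist (ψ x x) (ψ p x) ≤ κ * dist x p)
    (hp : ContinuousAt (ψ p) p) : ContinuousWithinAt (fun x => ψ x x) X p := by
  rw [ContinuousWithinAt, tendsto_iff_dist_tendsto_zero]
  have hbound : Tendsto (fun x => κ * dist x p + dist (ψ p x) (ψ p p)) (𝓝[X] p) (𝓝 0) := by
    have hκ : Tendsto (fun x => κ * dist x p) (𝓝 p) (𝓝 (κ * dist p p)) :=
      tendsto_const_nhds.mul (tendsto_id.dist tendsto_const_nhds)
    simpa using (hκ.add (tendsto_iff_dist_tendsto_zero.1 hp)).mono_left nhdsWithin_le_nhds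
  refine squeeze_zero' (Eventually.of_forall fun _ => dist_nonneg) ?_ hbound
  filter_upwards [self_mem_nhdsWithin] with x hx
  linarith [dist_triangle (ψ x x) (ψ p x) (ψ p p), hlip x hx]

section Envelope

variable {n₁ n₂ ℓ : ℕ} {Xb : Set (EuclideanSpace ℝ (Fin n₁))}
  {f : EuclideanSpace ℝ (Fin n₁) → EuclideanSpace ℝ (Fin n₂) → ℝ}
  {G : EuclideanSpace ℝ (Fin n₁) → EuclideanSpace ℝ (Fin n₂) → Fin ℓ → ℝ}
  {ψ : EuclideanSpace ℝ (Fin n₁) → EuclideanSpace ℝ (Fin n₁) → ℝ} {γ κ : ℝ}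
  {x z u : EuclideanSpace ℝ (Fin n₁)} {y : EuclideanSpace ℝ (Fin n₂)}

/-- Assumption A: `ψ x z = min { f z y : G x y ≤ 0 }` for `x, z ∈ X̄`. -/
def IsAttainedRecourse (Xb : Set (EuclideanSpace ℝ (Fin n₁)))
    (f : EuclideanSpace ℝ (Fin n₁) → EuclideanSpace ℝ (Fin n₂) → ℝ)
    (G : EuclideanSpace ℝ (Fin n₁) → EuclideanSpace ℝ (Fin n₂) → Fin ℓ → ℝ)
    (ψ : EuclideanSpace ℝ (Fin n₁) → EuclideanSpace ℝ (Fin n₁) → ℝ) : Prop :=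
  ∀ x ∈ Xb, ∀ z ∈ Xb, ∃ y : EuclideanSpace ℝ (Fin n₂),
    (∀ i, G x y i ≤ 0) ∧ ψ x z = f z y ∧
    ∀ y' : EuclideanSpace ℝ (Fin n₂), (∀ i, G x y' i ≤ 0) → ψ x z ≤ f z y'

def IsSubproblemSolution (Xb : Set (EuclideanSpace ℝ (Fin n₁)))
    (f : EuclideanSpace ℝ (Fin n₁) → EuclideanSpace ℝ (Fin n₂) → ℝ)
    (G : EuclideanSpace ℝ (Fin n₁) → EuclideanSpace ℝ (Fin n₂) → Fin ℓ → ℝ) (γ : ℝ)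
    (z u : EuclideanSpace ℝ (Fin n₁)) (y : EuclideanSpace ℝ (Fin n₂)) : Prop :=
  u ∈ Xb ∧ (∀ j, G u y j ≤ 0) ∧
    ∀ x ∈ Xb, ∀ y' : EuclideanSpace ℝ (Fin n₂), (∀ j, G x y' j ≤ 0) →
      f z y + ‖u - z‖ ^ 2 / (2 * γ) ≤ f z y' + ‖x - z‖ ^ 2 / (2 * γ)

/-- Majorant of `e_γψ = ‖·‖² / (2γ) - h` obtained by linearizing the convex function `h` at `z`,
`u / γ + c` being a subgradient of `h` there. -/
noncomputable def penvMajorant (Xb : Set (EuclideanSpace ℝ (Fin n₁)))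
    (f : EuclideanSpace ℝ (Fin n₁) → EuclideanSpace ℝ (Fin n₂) → ℝ)
    (G : EuclideanSpace ℝ (Fin n₁) → EuclideanSpace ℝ (Fin n₂) → Fin ℓ → ℝ) (γ : ℝ)
    (z u c x : EuclideanSpace ℝ (Fin n₁)) : ℝ :=
  ‖x‖ ^ 2 / (2 * γ) - (‖z‖ ^ 2 / (2 * γ) - penv Xb f G γ z) - ⟪(1 / γ) • u + c, x - z⟫

theorem IsAttainedRecourse.concaveOn (hψ : IsAttainedRecourse Xb f G ψ) (hXb : Convex ℝ Xb)
    (hf : ∀ y, ConcaveOn ℝ Set.univ (f · y)) (hx : x ∈ Xb) : ConcaveOn ℝ Xb (ψ x) :=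
  concaveOn_of_le_of_exists_eq (F := {y | ∀ i, G x y i ≤ 0}) hXb
    (fun y _ => (hf y).subset (Set.subset_univ _) hXb)
    (fun z hz y hy => by
      obtain ⟨-, -, -, hmin⟩ := hψ x hx z hz
      exact hmin y hy)
    (fun z hz => (hψ x hx z hz).imp fun _ hy => ⟨hy.1, hy.2.1⟩)

theorem IsAttainedRecourse.continuousOn_diag {X : Set (EuclideanSpace ℝ (Fin n₁))}
    (hψ : IsAttainedRecourse Xb f G ψ) (hXb : Convex ℝ Xb) (hX : X ⊆ interior Xb)
    (hf : ∀ y, ConcaveOn ℝ Set.univ (f · y))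
    (hlip : ∀ z ∈ X, ∀ x₁ ∈ Xb, ∀ x₂ ∈ Xb, |ψ x₁ z - ψ x₂ z| ≤ κ * ‖x₁ - x₂‖) :
    ContinuousOn (fun x => ψ x x) X := by
  intro p hp
  have hXsub : X ⊆ Xb := hX.trans interior_subset
  refine continuousWithinAt_diag_of_dist_le (κ := κ) (fun x hx => ?_) <|
    (hψ.concaveOn hXb hf (hXsub hp)).continuousOn_interior.continuousAt
      (isOpen_interior.mem_nhds (hX hp))
  rw [Real.dist_eq, dist_eq_norm]
  exact hlip x hx x (hXsub hx) p (hXsub hp)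

namespace IsSubproblemSolution

theorem penv_eq (h : IsSubproblemSolution Xb f G γ z u y) :
    penv Xb f G γ z = f z y + ‖u - z‖ ^ 2 / (2 * γ) :=
  IsLeast.csInf_eq ⟨⟨u, h.1, y, h.2.1, rfl⟩, by
    rintro v ⟨x, hx, y', hy', rfl⟩
    exact h.2.2 x hx y' hy'⟩

theorem penv_le (h : IsSubproblemSolution Xb f G γ z u y) {y' : EuclideanSpace ℝ (Fin n₂)}
    (hx : x ∈ Xb) (hy' : ∀ j, G x y' j ≤ 0) :
    penv Xb f G γ z ≤ f z y' + ‖x - z‖ ^ 2 / (2 * γ) :=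
  h.penv_eq ▸ h.2.2 x hx y' hy'

theorem penv_le_recourse (h : IsSubproblemSolution Xb f G γ z u y)
    (hψ : IsAttainedRecourse Xb f G ψ) (hz : z ∈ Xb) : penv Xb f G γ z ≤ ψ z z := by
  obtain ⟨y', hy', hψy', -⟩ := hψ z hz z hz
  simpa [hψy'] using h.penv_le hz hy'

theorem recourse_le_penv_add (h : IsSubproblemSolution Xb f G γ z u y)
    (hψ : IsAttainedRecourse Xb f G ψ) (hγ : 0 < γ) (hz : z ∈ Xb)
    (hlip : |ψ z z - ψ u z| ≤ κ * ‖z - u‖) : ψ z z ≤ penv Xb f G γ z + κ ^ 2 / 2 * γ := by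
  obtain ⟨-, -, -, hmin⟩ := hψ u h.1 z hz
  have hψu : ψ u z ≤ f z y := hmin y h.2.1
  set t := ‖u - z‖
  have hamgm : κ * t ≤ t ^ 2 / (2 * γ) + κ ^ 2 / 2 * γ := by
    have hsq : t ^ 2 / (2 * γ) + κ ^ 2 / 2 * γ - κ * t = (t - κ * γ) ^ 2 / (2 * γ) := by
      field_simp
      ring
    linarith [div_nonneg (sq_nonneg (t - κ * γ)) (by positivity : (0 : ℝ) ≤ 2 * γ)]
  rw [h.penv_eq]
  rw [norm_sub_rev] at hlip
  linarith [(abs_le.1 hlip).2]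

theorem penv_le_penvMajorant {c u' : EuclideanSpace ℝ (Fin n₁)} {y'' : EuclideanSpace ℝ (Fin n₂)}
    (h : IsSubproblemSolution Xb f G γ z u y) (h' : IsSubproblemSolution Xb f G γ x u' y'')
    (hc : ∀ w, -f w y ≥ -f z y + ⟪c, w - z⟫) (hγ : γ ≠ 0) :
    penv Xb f G γ x ≤ penvMajorant Xb f G γ z u c x := by
  have hfx : f x y ≤ f z y - ⟪c, x - z⟫ := by linarith [hc x]
  have hmaj : penvMajorant Xb f G γ z u c x
      = f z y + ‖u - x‖ ^ 2 / (2 * γ) - ⟪c, x - z⟫ := by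
    rw [penvMajorant, h.penv_eq, norm_sub_sq_real u x, norm_sub_sq_real u z, inner_add_left,
      real_inner_smul_left, inner_sub_right]
    field_simp
    ring
  rw [hmaj]
  linarith [h'.penv_le h.1 h.2.1]

end IsSubproblemSolution

theorem penvMajorant_self {c : EuclideanSpace ℝ (Fin n₁)} :
    penvMajorant Xb f G γ z u c z = penv Xb f G γ z := by
  simp [penvMajorant]

end Envelope

section Objective

variable {n₁ n₂ ℓ S : ℕ} {φ : EuclideanSpace ℝ (Fin n₁) → ℝ}
  {Xb : Set (EuclideanSpace ℝ (Fin n₁))}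
  {f : Fin S → EuclideanSpace ℝ (Fin n₁) → EuclideanSpace ℝ (Fin n₂) → ℝ}
  {G : Fin S → EuclideanSpace ℝ (Fin n₁) → EuclideanSpace ℝ (Fin n₂) → Fin ℓ → ℝ}
  {ψ : Fin S → EuclideanSpace ℝ (Fin n₁) → EuclideanSpace ℝ (Fin n₁) → ℝ} {γ : ℝ}
  {x z : EuclideanSpace ℝ (Fin n₁)} {u u' : Fin S → EuclideanSpace ℝ (Fin n₁)}
  {y y' : Fin S → EuclideanSpace ℝ (Fin n₂)}

/-- The paper's `ζ̄_S`. -/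
noncomputable def recourseObjective {E : Type*} {S : ℕ} (φ : E → ℝ) (ψ : Fin S → E → E → ℝ)
    (x : E) : ℝ :=
  φ x + (1 / (S : ℝ)) * ∑ s : Fin S, ψ s x x

noncomputable def envelopeObjective (φ : EuclideanSpace ℝ (Fin n₁) → ℝ)
    (Xb : Set (EuclideanSpace ℝ (Fin n₁)))
    (f : Fin S → EuclideanSpace ℝ (Fin n₁) → EuclideanSpace ℝ (Fin n₂) → ℝ)
    (G : Fin S → EuclideanSpace ℝ (Fin n₁) → EuclideanSpace ℝ (Fin n₂) → Fin ℓ → ℝ) (γ : ℝ)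
    (x : EuclideanSpace ℝ (Fin n₁)) : ℝ :=
  φ x + (1 / (S : ℝ)) * ∑ s : Fin S, penv Xb (f s) (G s) γ x

theorem continuousOn_recourseObjective {X : Set (EuclideanSpace ℝ (Fin n₁))} {κ : Fin S → ℝ}
    (hφ : ConvexOn ℝ Set.univ φ) (hXb : Convex ℝ Xb) (hX : X ⊆ interior Xb)
    (hf : ∀ s y, ConcaveOn ℝ Set.univ (f s · y))
    (hψ : ∀ s, IsAttainedRecourse Xb (f s) (G s) (ψ s))
    (hlip : ∀ s, ∀ z ∈ X, ∀ x₁ ∈ Xb, ∀ x₂ ∈ Xb, |ψ s x₁ z - ψ s x₂ z| ≤ κ s * ‖x₁ - x₂‖) :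
    ContinuousOn (recourseObjective φ ψ) X :=
  ((hφ.continuousOn isOpen_univ).mono (Set.subset_univ X)).add <| continuousOn_const.mul <|
    continuousOn_finsetSum _ fun s _ => (hψ s).continuousOn_diag hXb hX (hf s) (hlip s)

theorem envelopeObjective_le_recourseObjective
    (hsol : ∀ s, IsSubproblemSolution Xb (f s) (G s) γ z (u s) (y s))
    (hψ : ∀ s, IsAttainedRecourse Xb (f s) (G s) (ψ s)) (hz : z ∈ Xb) :
    envelopeObjective φ Xb f G γ z ≤ recourseObjective φ ψ z := by
  unfold envelopeObjective recourseObjective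
  gcongr with s
  exact (hsol s).penv_le_recourse (hψ s) hz

theorem recourseObjective_le_envelopeObjective_add {κ : Fin S → ℝ}
    (hsol : ∀ s, IsSubproblemSolution Xb (f s) (G s) γ z (u s) (y s))
    (hψ : ∀ s, IsAttainedRecourse Xb (f s) (G s) (ψ s)) (hγ : 0 < γ) (hz : z ∈ Xb)
    (hlip : ∀ s, |ψ s z z - ψ s (u s) z| ≤ κ s * ‖z - u s‖) :
    recourseObjective φ ψ z
      ≤ envelopeObjective φ Xb f G γ z + (1 / (S : ℝ)) * (∑ s : Fin S, κ s ^ 2 / 2) * γ := by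
  have hsum : ∑ s, ψ s z z ≤ ∑ s, penv Xb (f s) (G s) γ z + (∑ s, κ s ^ 2 / 2) * γ := by
    rw [Finset.sum_mul, ← Finset.sum_add_distrib]
    gcongr with s
    exact (hsol s).recourse_le_penv_add (hψ s) hγ hz (hlip s)
  unfold envelopeObjective recourseObjective
  have hS : (0 : ℝ) ≤ 1 / (S : ℝ) := by positivity
  linarith [mul_le_mul_of_nonneg_left hsum hS]

theorem envelopeObjective_le_of_master {c : Fin S → EuclideanSpace ℝ (Fin n₁)}
    (hsol : ∀ s, IsSubproblemSolution Xb (f s) (G s) γ z (u s) (y s))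
    (hsol' : ∀ s, IsSubproblemSolution Xb (f s) (G s) γ x (u' s) (y' s))
    (hc : ∀ s w, -f s w (y s) ≥ -f s z (y s) + ⟪c s, w - z⟫) (hγ : γ ≠ 0)
    (hmaster : φ x + (1 / (S : ℝ)) * ∑ s, penvMajorant Xb (f s) (G s) γ z (u s) (c s) x
      ≤ φ z + (1 / (S : ℝ)) * ∑ s, penvMajorant Xb (f s) (G s) γ z (u s) (c s) z) :
    envelopeObjective φ Xb f G γ x ≤ envelopeObjective φ Xb f G γ z := by
  calc envelopeObjective φ Xb f G γ x
      ≤ φ x + (1 / (S : ℝ)) * ∑ s, penvMajorant Xb (f s) (G s) γ z (u s) (c s) x := by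
        unfold envelopeObjective
        gcongr with s
        exact (hsol s).penv_le_penvMajorant (hsol' s) (hc s) hγ
    _ ≤ _ := hmaster
    _ = envelopeObjective φ Xb f G γ z := by simp only [penvMajorant_self, envelopeObjective]

theorem recourseObjective_le_add_of_envelopeObjective_le {κ : Fin S → ℝ}
    {x' : EuclideanSpace ℝ (Fin n₁)}
    (hsol : ∀ s, IsSubproblemSolution Xb (f s) (G s) γ x (u s) (y s))
    (hsol' : ∀ s, IsSubproblemSolution Xb (f s) (G s) γ x' (u' s) (y' s))
    (hψ : ∀ s, IsAttainedRecourse Xb (f s) (G s) (ψ s)) (hγ : 0 < γ) (hx : x ∈ Xb)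
    (hx' : x' ∈ Xb) (hlip : ∀ s, |ψ s x' x' - ψ s (u' s) x'| ≤ κ s * ‖x' - u' s‖)
    (hdesc : envelopeObjective φ Xb f G γ x' ≤ envelopeObjective φ Xb f G γ x) :
    recourseObjective φ ψ x'
      ≤ recourseObjective φ ψ x + (1 / (S : ℝ)) * (∑ s : Fin S, κ s ^ 2 / 2) * γ := by
  linarith [recourseObjective_le_envelopeObjective_add (φ := φ) hsol' hψ hγ hx' hlip,
    envelopeObjective_le_recourseObjective (φ := φ) hsol hψ hx]

end Objective

theorem stmt16_general {n₁ n₂ ℓ S : ℕ}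
    (φ : EuclideanSpace ℝ (Fin n₁) → ℝ) (hφ : ConvexOn ℝ Set.univ φ)
    (X Xb : Set (EuclideanSpace ℝ (Fin n₁)))
    (hXcomp : IsCompact X)
    (hXbconv : Convex ℝ Xb)
    (hXint : X ⊆ interior Xb)
    (f : Fin S → EuclideanSpace ℝ (Fin n₁) → EuclideanSpace ℝ (Fin n₂) → ℝ)
    (hfconc : ∀ s y, ConcaveOn ℝ Set.univ (fun x => f s x y))
    (G : Fin S → EuclideanSpace ℝ (Fin n₁) → EuclideanSpace ℝ (Fin n₂) → Fin ℓ → ℝ)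
    (ψb : Fin S → EuclideanSpace ℝ (Fin n₁) → EuclideanSpace ℝ (Fin n₁) → ℝ)
    (hA : ∀ s, ∀ x ∈ Xb, ∀ z ∈ Xb, ∃ y : EuclideanSpace ℝ (Fin n₂),
      (∀ i, G s x y i ≤ 0) ∧ ψb s x z = f s z y ∧
      ∀ y' : EuclideanSpace ℝ (Fin n₂), (∀ i, G s x y' i ≤ 0) → ψb s x z ≤ f s z y')
    (κ : Fin S → ℝ)
    (hB : ∀ s, ∀ z ∈ X, ∀ x₁ ∈ Xb, ∀ x₂ ∈ Xb,
      |ψb s x₁ z - ψb s x₂ z| ≤ κ s * ‖x₁ - x₂‖)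
    (γseq : ℕ → ℝ)
    (hγpos : ∀ ν, 0 < γseq ν)
    (xν : ℕ → EuclideanSpace ℝ (Fin n₁)) (hx0 : xν 0 ∈ X)
    (xi : ℕ → ℕ → EuclideanSpace ℝ (Fin n₁))
    (hinit : ∀ ν, xi ν 0 = xν ν)
    (xs : ℕ → ℕ → Fin S → EuclideanSpace ℝ (Fin n₁))
    (ys : ℕ → ℕ → Fin S → EuclideanSpace ℝ (Fin n₂))
    (cs : ℕ → ℕ → Fin S → EuclideanSpace ℝ (Fin n₁))
    (hxsmem : ∀ ν i s, xs ν i s ∈ Xb)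
    (hfeas : ∀ ν i s j, G s (xs ν i s) (ys ν i s) j ≤ 0)
    (hmin : ∀ ν i s, ∀ x ∈ Xb, ∀ y : EuclideanSpace ℝ (Fin n₂), (∀ j, G s x y j ≤ 0) →
      f s (xi ν i) (ys ν i s) + ‖xs ν i s - xi ν i‖ ^ 2 / (2 * γseq ν)
        ≤ f s (xi ν i) y + ‖x - xi ν i‖ ^ 2 / (2 * γseq ν))
    (hcs : ∀ ν i s, ∀ z' : EuclideanSpace ℝ (Fin n₁),
      -f s z' (ys ν i s) ≥ -f s (xi ν i) (ys ν i s) + ⟪cs ν i s, z' - xi ν i⟫)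
    (hmasterX : ∀ ν i, xi ν (i + 1) ∈ X)
    (hmaster : ∀ ν i, ∀ x ∈ X,
      φ (xi ν (i + 1)) + (1 / (S : ℝ)) * ∑ s : Fin S,
        (‖xi ν (i + 1)‖ ^ 2 / (2 * γseq ν)
          - (‖xi ν i‖ ^ 2 / (2 * γseq ν) - penv Xb (f s) (G s) (γseq ν) (xi ν i))
          - ⟪(1 / γseq ν) • xs ν i s + cs ν i s, xi ν (i + 1) - xi ν i⟫)
      ≤ φ x + (1 / (S : ℝ)) * ∑ s : Fin S,
        (‖x‖ ^ 2 / (2 * γseq ν)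
          - (‖xi ν i‖ ^ 2 / (2 * γseq ν) - penv Xb (f s) (G s) (γseq ν) (xi ν i))
          - ⟪(1 / γseq ν) • xs ν i s + cs ν i s, x - xi ν i⟫))
    (iν : ℕ → ℕ)
    (hnext : ∀ ν, xν (ν + 1) = xi ν (iν ν + 1))
    (hsum : Summable γseq) :
    ∃ L : ℝ,
      Tendsto (fun ν => φ (xν ν) + (1 / (S : ℝ)) * ∑ s : Fin S, ψb s (xν ν) (xν ν))
        atTop (𝓝 L) ∧
      ∀ xbar : EuclideanSpace ℝ (Fin n₁),
        (∃ σ : ℕ → ℕ, StrictMono σ ∧ Tendsto (fun k => xν (σ k)) atTop (𝓝 xbar)) →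
        φ xbar + (1 / (S : ℝ)) * ∑ s : Fin S, ψb s xbar xbar = L := by
  have hXsub : X ⊆ Xb := hXint.trans interior_subset
  have hxνX : ∀ ν, xν ν ∈ X := fun ν => by
    cases ν
    exacts [hx0, hnext _ ▸ hmasterX _ _]
  have hxiX : ∀ ν i, xi ν i ∈ X := fun ν i => by
    cases i
    exacts [hinit ν ▸ hxνX ν, hmasterX ν _]
  have hsol : ∀ ν i s, IsSubproblemSolution Xb (f s) (G s) (γseq ν) (xi ν i) (xs ν i s)
      (ys ν i s) := fun ν i s => ⟨hxsmem ν i s, hfeas ν i s, hmin ν i s⟩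
  have hinner : ∀ ν i, envelopeObjective φ Xb f G (γseq ν) (xi ν i)
      ≤ envelopeObjective φ Xb f G (γseq ν) (xi ν 0) := fun ν i =>
    antitone_nat_of_succ_le (f := fun i => envelopeObjective φ Xb f G (γseq ν) (xi ν i))
      (fun i => envelopeObjective_le_of_master (hsol ν i) (hsol ν (i + 1)) (hcs ν i)
        (hγpos ν).ne' (hmaster ν i _ (hxiX ν i))) (Nat.zero_le i)
  set C := (1 / (S : ℝ)) * ∑ s : Fin S, κ s ^ 2 / 2
  have hdesc : ∀ ν, recourseObjective φ ψb (xν (ν + 1))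
      ≤ recourseObjective φ ψb (xν ν) + C * γseq ν := fun ν => by
    have hz := hxiX ν (iν ν + 1)
    rw [hnext, ← hinit ν]
    exact recourseObjective_le_add_of_envelopeObjective_le (hsol ν 0) (hsol ν _) hA (hγpos ν)
      (hXsub (hxiX ν 0)) (hXsub hz) (fun s => hB s _ hz _ (hXsub hz) _ (hxsmem ν _ s))
      (hinner ν _)
  have hZ : ContinuousOn (recourseObjective φ ψb) X :=
    continuousOn_recourseObjective hφ hXbconv hXint hfconc hA hB
  obtain ⟨L, hL⟩ := exists_tendsto_of_le_add_of_summable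
    (a := fun ν => recourseObjective φ ψb (xν ν)) hdesc
    (fun ν => mul_nonneg (by positivity) (hγpos ν).le) (hsum.mul_left C)
    ((hXcomp.bddBelow_image hZ).mono
      (Set.range_subset_iff.2 fun ν => Set.mem_image_of_mem _ (hxνX ν)))
  exact ⟨L, hL, fun xbar ⟨σ, hσ, hlim⟩ => eq_of_tendsto_comp_of_tendsto_subseq
    (Z := recourseObjective φ ψb) hZ hXcomp.isClosed hxνX hL hσ hlim⟩

theorem stmt16 {n₁ n₂ ℓ S : ℕ} (hS : 0 < S)
    (φ : EuclideanSpace ℝ (Fin n₁) → ℝ) (hφ : ConvexOn ℝ Set.univ φ)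
    (X Xb : Set (EuclideanSpace ℝ (Fin n₁)))
    (hXne : X.Nonempty) (hXconv : Convex ℝ X) (hXcomp : IsCompact X)
    (hXbne : Xb.Nonempty) (hXbconv : Convex ℝ Xb) (hXbcomp : IsCompact Xb)
    (hXint : X ⊆ interior Xb)
    (f : Fin S → EuclideanSpace ℝ (Fin n₁) → EuclideanSpace ℝ (Fin n₂) → ℝ)
    (hfconc : ∀ s y, ConcaveOn ℝ Set.univ (fun x => f s x y))
    (hfconv : ∀ s x, ConvexOn ℝ Set.univ (fun y => f s x y))
    (G : Fin S → EuclideanSpace ℝ (Fin n₁) → EuclideanSpace ℝ (Fin n₂) → Fin ℓ → ℝ)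
    (hG : ∀ s i, ConvexOn ℝ Set.univ
      (fun p : EuclideanSpace ℝ (Fin n₁) × EuclideanSpace ℝ (Fin n₂) => G s p.1 p.2 i))
    (ψb : Fin S → EuclideanSpace ℝ (Fin n₁) → EuclideanSpace ℝ (Fin n₁) → ℝ)
    (hA : ∀ s, ∀ x ∈ Xb, ∀ z ∈ Xb, ∃ y : EuclideanSpace ℝ (Fin n₂),
      (∀ i, G s x y i ≤ 0) ∧ ψb s x z = f s z y ∧
      ∀ y' : EuclideanSpace ℝ (Fin n₂), (∀ i, G s x y' i ≤ 0) → ψb s x z ≤ f s z y')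
    (κ : Fin S → ℝ) (hκ : ∀ s, 0 ≤ κ s)
    (hB : ∀ s, ∀ z ∈ X, ∀ x₁ ∈ Xb, ∀ x₂ ∈ Xb,
      |ψb s x₁ z - ψb s x₂ z| ≤ κ s * ‖x₁ - x₂‖)
    (γseq εseq : ℕ → ℝ)
    (hγpos : ∀ ν, 0 < γseq ν) (hγanti : Antitone γseq)
    (hγ0 : Tendsto γseq atTop (𝓝 0))
    (hεpos : ∀ ν, 0 < εseq ν) (hεanti : Antitone εseq)
    (hε0 : Tendsto εseq atTop (𝓝 0))
    (xν : ℕ → EuclideanSpace ℝ (Fin n₁)) (hx0 : xν 0 ∈ X)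
    (xi : ℕ → ℕ → EuclideanSpace ℝ (Fin n₁))
    (hinit : ∀ ν, xi ν 0 = xν ν)
    (xs : ℕ → ℕ → Fin S → EuclideanSpace ℝ (Fin n₁))
    (ys : ℕ → ℕ → Fin S → EuclideanSpace ℝ (Fin n₂))
    (cs : ℕ → ℕ → Fin S → EuclideanSpace ℝ (Fin n₁))
    (hxsmem : ∀ ν i s, xs ν i s ∈ Xb)
    (hfeas : ∀ ν i s j, G s (xs ν i s) (ys ν i s) j ≤ 0)
    (hmin : ∀ ν i s, ∀ x ∈ Xb, ∀ y : EuclideanSpace ℝ (Fin n₂), (∀ j, G s x y j ≤ 0) →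
      f s (xi ν i) (ys ν i s) + ‖xs ν i s - xi ν i‖ ^ 2 / (2 * γseq ν)
        ≤ f s (xi ν i) y + ‖x - xi ν i‖ ^ 2 / (2 * γseq ν))
    (hcs : ∀ ν i s, ∀ z' : EuclideanSpace ℝ (Fin n₁),
      -f s z' (ys ν i s) ≥ -f s (xi ν i) (ys ν i s) + ⟪cs ν i s, z' - xi ν i⟫)
    (hmasterX : ∀ ν i, xi ν (i + 1) ∈ X)
    (hmaster : ∀ ν i, ∀ x ∈ X,
      φ (xi ν (i + 1)) + (1 / (S : ℝ)) * ∑ s : Fin S,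
        (‖xi ν (i + 1)‖ ^ 2 / (2 * γseq ν)
          - (‖xi ν i‖ ^ 2 / (2 * γseq ν) - penv Xb (f s) (G s) (γseq ν) (xi ν i))
          - ⟪(1 / γseq ν) • xs ν i s + cs ν i s, xi ν (i + 1) - xi ν i⟫)
      ≤ φ x + (1 / (S : ℝ)) * ∑ s : Fin S,
        (‖x‖ ^ 2 / (2 * γseq ν)
          - (‖xi ν i‖ ^ 2 / (2 * γseq ν) - penv Xb (f s) (G s) (γseq ν) (xi ν i))
          - ⟪(1 / γseq ν) • xs ν i s + cs ν i s, x - xi ν i⟫))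
    (iν : ℕ → ℕ)
    (hstop : ∀ ν, ‖xi ν (iν ν + 1) - xi ν (iν ν)‖ ≤ εseq ν * γseq ν)
    (hleast : ∀ ν, ∀ j < iν ν, εseq ν * γseq ν < ‖xi ν (j + 1) - xi ν j‖)
    (hnext : ∀ ν, xν (ν + 1) = xi ν (iν ν + 1))
    (hsum : Summable γseq) :
    ∃ L : ℝ,
      Tendsto (fun ν => φ (xν ν) + (1 / (S : ℝ)) * ∑ s : Fin S, ψb s (xν ν) (xν ν))
        atTop (𝓝 L) ∧
      ∀ xbar : EuclideanSpace ℝ (Fin n₁),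
        (∃ σ : ℕ → ℕ, StrictMono σ ∧ Tendsto (fun k => xν (σ k)) atTop (𝓝 xbar)) →
        φ xbar + (1 / (S : ℝ)) * ∑ s : Fin S, ψb s xbar xbar = L :=
  stmt16_general φ hφ X Xb hXcomp hXbconv hXint f hfconc G ψb hA κ hB γseq hγpos xν hx0 xi hinit xs
    ys cs hxsmem hfeas hmin hcs hmasterX hmaster iν hnext hsum
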